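/- Let N be a commutative nonassociative F-algebra generated as an F-algebra by two axes of associative type b₀ and b₁. Then the element x := b₀ + b₁ − b₀b₁ satisfies b₀x = b₀, b₁x = b₁, and xx = x. -/
import Mathlib


/-- The `s`-eigenspace of left multiplication by `a`. -/
def eigSp {F M : Type} [Field F] [NonUnitalNonAssocCommRing M] [Module F M]
    [SMulCommClass F M M] [IsScalarTower F M M] (a : M) (s : F) : Submodule F M where
  carrier := {x | a * x = s • x}
  add_mem' := by
    intro x y hx hy
    simp only [Set.mem_setOf_eq] at *
    rw [mul_add, hx, hy, smul_add]
  zero_mem' := by simp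
  smul_mem' := by
    intro c x hx
    simp only [Set.mem_setOf_eq] at *
    rw [mul_smul_comm, hx, smul_smul, mul_comm, ← smul_smul]


/-- An axis of associative type: an idempotent `b` with `M = E₁(b) ⊕ E₀(b)` obeying the
associative-type fusion rule. -/
def IsAssocAxis {F M : Type} [Field F] [NonUnitalNonAssocCommRing M] [Module F M]
    [SMulCommClass F M M] [IsScalarTower F M M] (b : M) : Prop :=
  b * b = b ∧
  (∀ x1 ∈ eigSp b (1 : F), ∀ x0 ∈ eigSp b (0 : F), x1 + x0 = 0 → x1 = 0 ∧ x0 = 0) ∧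
  (∀ x : M, ∃ x1 ∈ eigSp b (1 : F), ∃ x0 ∈ eigSp b (0 : F), x = x1 + x0) ∧
  (∀ x ∈ eigSp b (0 : F), ∀ y ∈ eigSp b (0 : F), x * y ∈ eigSp b (0 : F)) ∧
  (∀ x ∈ eigSp b (1 : F), ∀ y ∈ eigSp b (1 : F), x * y ∈ eigSp b (1 : F)) ∧
  (∀ x ∈ eigSp b (0 : F), ∀ y ∈ eigSp b (1 : F), x * y ∈ eigSp b (0 : F) ⊔ eigSp b (1 : F))

lemma mem_eigSp {F M : Type} [Field F] [NonUnitalNonAssocCommRing M] [Module F M]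
    [SMulCommClass F M M] [IsScalarTower F M M] {a x : M} {s : F} :
    x ∈ eigSp a s ↔ a * x = s • x := Iff.rfl

/-- For an axis of associative type, left multiplication is idempotent as an operator. -/
lemma isAssocAxis_mul_mul {F M : Type} [Field F] [NonUnitalNonAssocCommRing M] [Module F M]
    [SMulCommClass F M M] [IsScalarTower F M M] {b : M} (h : IsAssocAxis (F := F) b)
    (y : M) : b * (b * y) = b * y := by
  obtain ⟨x1, hx1, x0, hx0, hy⟩ := h.2.2.1 y
  rw [mem_eigSp] at hx1 hx0
  rw [one_smul] at hx1
  rw [zero_smul] at hx0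
  rw [hy, mul_add, hx1, hx0, add_zero, hx1]

/-- In an algebra generated by two axes of associative type `b₀, b₁`, the element
`x := b₀ + b₁ − b₀b₁` satisfies `b₀x = b₀`, `b₁x = b₁` and `xx = x`. -/
theorem assoc_type_idempotent {F N : Type} [Field F] [NonUnitalNonAssocCommRing N]
    [Module F N] [SMulCommClass F N N] [IsScalarTower F N N]
    (hchar : ringChar F ≠ 2) (b₀ b₁ : N)
    (h₀ : IsAssocAxis (F := F) b₀) (h₁ : IsAssocAxis (F := F) b₁)
    (hgen : NonUnitalAlgebra.adjoin F {b₀, b₁} = ⊤) :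
    b₀ * (b₀ + b₁ - b₀ * b₁) = b₀ ∧
    b₁ * (b₀ + b₁ - b₀ * b₁) = b₁ ∧
    (b₀ + b₁ - b₀ * b₁) * (b₀ + b₁ - b₀ * b₁) = b₀ + b₁ - b₀ * b₁ := by
  set z := b₀ * b₁ with hzdef
  have hi0 : b₀ * b₀ = b₀ := h₀.1
  have hi1 : b₁ * b₁ = b₁ := h₁.1
  have hz0 : b₀ * z = z := isAssocAxis_mul_mul h₀ b₁
  have hz1 : b₁ * z = z := by
    rw [hzdef, mul_comm b₀ b₁]
    exact isAssocAxis_mul_mul h₁ b₀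
  have hb10 : b₁ * b₀ = z := by rw [hzdef, mul_comm]
  -- v' := b₀ - z is a 0-eigenvector of b₁
  have hv' : b₁ * (b₀ - z) = (0 : F) • (b₀ - z) := by
    rw [mul_sub, hb10, hz1, sub_self, zero_smul]
  have hv'2 : b₁ * ((b₀ - z) * (b₀ - z)) = 0 := by
    have := h₁.2.2.2.1 (b₀ - z) hv' (b₀ - z) hv'
    rw [mem_eigSp, zero_smul] at this
    exact this
  -- expand (b₀ - z)(b₀ - z)
  have hexp : (b₀ - z) * (b₀ - z) = (b₀ - z) - (z - z * z) := by
    rw [sub_mul, mul_sub, mul_sub, hi0, mul_comm z b₀, hz0]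
  -- key: z is idempotent
  have hzz : z * z = z := by
    have : b₁ * ((b₀ - z) * (b₀ - z)) = z * z - z := by
      rw [hexp, mul_sub, mul_sub, mul_sub, hb10, hz1, sub_self, zero_sub,
        mul_comm b₁ (z * z)]
      have hzz1 : z * z * b₁ = z * z := by
        have h1 : b₁ * z = (1 : F) • z := by rw [hz1, one_smul]
        have := h₁.2.2.2.2.1 z h1 z h1
        rw [mem_eigSp, one_smul] at this
        rw [mul_comm]
        exact this
      rw [hzz1]
      abel
    rw [hv'2] at this
    have := this.symm
    rwa [sub_eq_zero] at this
  refine ⟨?_, ?_, ?_⟩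
  · rw [mul_sub, mul_add, hi0, hz0, ← hzdef]
    abel
  · rw [mul_sub, mul_add, hb10, hi1, hz1]
    abel
  · rw [sub_mul, add_mul, mul_sub, mul_sub, mul_sub, mul_add, mul_add, mul_add,
      hi0, hi1, hb10, ← hzdef, hz0, hz1, mul_comm z b₀, hz0, mul_comm z b₁, hz1, hzz]
    abel
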